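/- arXiv:2111.02384 — 5 statements merged into one kernel-verified Lean document; each statement's English description precedes it below -/
import Mathlib

section
/- Let H be a complex Hilbert space, ξ in the open unit ball, s = √(1-|ξ|²), A(v) = s·v + ξ⟨v,ξ⟩/(1+s), and φ_ξ(z) = A((ξ - z)/(1 - ⟨z,ξ⟩)). Then φ_ξ is an involution on the unit ball: φ_ξ(φ_ξ(z)) = z for all z with |z| < 1. -/
set_option maxHeartbeats 1000000

theorem mobius_involution
    {H : Type*} [NormedAddCommGroup H] [InnerProductSpace ℂ H]
    (ξ : H) (hξ : ‖ξ‖ < 1) (s : ℝ) (hs : s = Real.sqrt (1 - ‖ξ‖ ^ 2))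
    (A : H → H)
    (hA : ∀ v : H, A v = (s : ℂ) • v + ((inner ℂ ξ v : ℂ) / (1 + (s : ℂ))) • ξ)
    (φ : H → H)
    (hφ : ∀ z : H, φ z = A ((1 - (inner ℂ ξ z : ℂ))⁻¹ • (ξ - z))) :
    ∀ z : H, ‖z‖ < 1 → φ (φ z) = z := by
  intro z hz
  have hξ0 : (0:ℝ) ≤ ‖ξ‖ := norm_nonneg _
  have h1 : 0 < 1 - ‖ξ‖ ^ 2 := by nlinarith
  have hs0 : 0 < s := by rw [hs]; exact Real.sqrt_pos.mpr h1
  have hs2r : s ^ 2 = 1 - ‖ξ‖ ^ 2 := by rw [hs]; exact Real.sq_sqrt h1.le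
  have hξξ : (inner ℂ ξ ξ : ℂ) = 1 - (s:ℂ)^2 := by
    rw [inner_self_eq_norm_sq_to_K]
    have h2 : (‖ξ‖^2 : ℝ) = 1 - s^2 := by linarith
    norm_cast
    exact congrArg _ h2
  set c : ℂ := (inner ℂ ξ z : ℂ) with hc
  have hcn : ‖c‖ < 1 := by
    calc ‖c‖ ≤ ‖ξ‖ * ‖z‖ := norm_inner_le_norm ξ z
    _ < 1 := by nlinarith
  have hc1 : (1:ℂ) - c ≠ 0 := by
    intro h
    have : c = 1 := by linear_combination -h
    rw [this] at hcn; simp at hcn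
  have hsne : (s:ℂ) ≠ 0 := by exact_mod_cast hs0.ne'
  have hs1 : (1:ℂ) + (s:ℂ) ≠ 0 := by
    have : (0:ℝ) < 1 + s := by linarith
    intro h
    have : ((1 + s : ℝ) : ℂ) = 0 := by push_cast; linear_combination h
    exact absurd (Complex.ofReal_eq_zero.mp this) (by linarith)
  have hd : (1:ℂ) - (inner ℂ ξ (φ z) : ℂ) = (s:ℂ)^2 / (1 - c) := by
    rw [hφ, hA]
    simp only [inner_add_right, inner_smul_right, inner_sub_right, hξξ, ← hc]
    field_simp
    ring
  have hdne : (1:ℂ) - (inner ℂ ξ (φ z) : ℂ) ≠ 0 := by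
    rw [hd]; exact div_ne_zero (pow_ne_zero _ hsne) hc1
  have hd' : ((1:ℂ) - (inner ℂ ξ (φ z) : ℂ))⁻¹ = (1 - c) / (s:ℂ)^2 := by
    rw [hd, inv_div]
  rw [hφ (φ z), hA, hd']
  rw [hφ z, hA] 
  simp only [inner_add_right, inner_smul_right, inner_sub_right, hξξ, ← hc]
  match_scalars
  · field_simp [hc1, hsne, hs1]
    ring_nf
  · field_simp [hc1, hsne, hs1]
end

section
/- Let u : 𝔻 → (-1,1) be a real-valued harmonic function on the unit disc with u(0) = b ∈ (-1,1), continuous up to the boundary point 1 with u(1) = 1, and differentiable at 1. Then the radial derivative satisfies |∂_r u(1)| ≥ (2/π)·(1-a)/(1+a), where a = tan(π|b|/4). -/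
open Real Complex Metric Set

lemma normSq_sin_aux (X Y : ℝ) :
    Complex.normSq (Complex.sin (X + Y * Complex.I)) = Real.sin X ^ 2 + Real.sinh Y ^ 2 := by
  have h : Complex.sin (X + Y * Complex.I)
      = (Real.sin X * Real.cosh Y : ℝ) + (Real.cos X * Real.sinh Y : ℝ) * Complex.I := by
    rw [Complex.sin_add_mul_I]; push_cast; ring
  rw [h, Complex.normSq_add_mul_I]
  nlinarith [Real.sin_sq_add_cos_sq X, Real.cosh_sq Y]

lemma normSq_cos_aux (X Y : ℝ) :
    Complex.normSq (Complex.cos (X + Y * Complex.I)) = Real.cos X ^ 2 + Real.sinh Y ^ 2 := by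
  have h : Complex.cos (X + Y * Complex.I)
      = (Real.cos X * Real.cosh Y : ℝ) + (-(Real.sin X * Real.sinh Y) : ℝ) * Complex.I := by
    rw [Complex.cos_add_mul_I]; push_cast; ring
  rw [h, Complex.normSq_add_mul_I]
  nlinarith [Real.sin_sq_add_cos_sq X, Real.cosh_sq Y]

lemma cos_sq_lt (X : ℝ) (hX : |X| < π/4) : Real.sin X ^ 2 < Real.cos X ^ 2 := by
  have h2 : Real.cos (2*X) > 0 := by
    apply Real.cos_pos_of_mem_Ioo
    constructor
    · nlinarith [abs_lt.1 hX]
    · nlinarith [abs_lt.1 hX]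
  have := Real.cos_two_mul X
  nlinarith [Real.sin_sq_add_cos_sq X]

lemma cos_ne_zero_aux (w : ℂ) (hw : |w.re| < π/4) : Complex.cos w ≠ 0 := by
  intro h
  have h1 : Complex.normSq (Complex.cos (w.re + w.im * Complex.I)) = 0 := by
    rw [Complex.re_add_im, h]; simp
  rw [normSq_cos_aux] at h1
  have hc : Real.cos w.re > 0 := by
    apply Real.cos_pos_of_mem_Ioo
    constructor
    · nlinarith [abs_lt.1 hw, Real.pi_pos]
    · nlinarith [abs_lt.1 hw, Real.pi_pos]
  nlinarith [sq_nonneg (Real.sinh w.im)]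

lemma abs_tan_lt_one (w : ℂ) (hw : |w.re| < π/4) : ‖Complex.tan w‖ < 1 := by
  have hc : Real.cos w.re > 0 := by
    apply Real.cos_pos_of_mem_Ioo
    constructor
    · nlinarith [abs_lt.1 hw, Real.pi_pos]
    · nlinarith [abs_lt.1 hw, Real.pi_pos]
  have hlt := cos_sq_lt w.re hw
  have hrw : w = (w.re : ℂ) + w.im * Complex.I := (Complex.re_add_im w).symm
  have hns : Complex.normSq (Complex.cos w) = Real.cos w.re ^ 2 + Real.sinh w.im ^ 2 := by
    conv_lhs => rw [hrw]
    rw [normSq_cos_aux]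
  have hnss : Complex.normSq (Complex.sin w) = Real.sin w.re ^ 2 + Real.sinh w.im ^ 2 := by
    conv_lhs => rw [hrw]
    rw [normSq_sin_aux]
  have hd : Complex.normSq (Complex.cos w) > 0 := by rw [hns]; nlinarith [sq_nonneg (Real.sinh w.im)]
  have habs : ‖Complex.tan w‖ ^ 2
      = Complex.normSq (Complex.sin w) / Complex.normSq (Complex.cos w) := by
    rw [Complex.tan_eq_sin_div_cos, norm_div, div_pow, Complex.sq_norm, Complex.sq_norm]
  have h2 : ‖Complex.tan w‖ ^ 2 < 1 := by
    rw [habs, div_lt_one hd, hns, hnss]; linarith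
  nlinarith [norm_nonneg (Complex.tan w)]

lemma tan_abs_le_abs_tan (w : ℂ) (hw : |w.re| < π/4) :
    |Real.tan w.re| ≤ ‖Complex.tan w‖ := by
  have hc : Real.cos w.re > 0 := by
    apply Real.cos_pos_of_mem_Ioo
    constructor
    · nlinarith [abs_lt.1 hw, Real.pi_pos]
    · nlinarith [abs_lt.1 hw, Real.pi_pos]
  have hlt := cos_sq_lt w.re hw
  have hrw : w = (w.re : ℂ) + w.im * Complex.I := (Complex.re_add_im w).symm
  have hns : Complex.normSq (Complex.cos w) = Real.cos w.re ^ 2 + Real.sinh w.im ^ 2 := by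
    conv_lhs => rw [hrw]
    rw [normSq_cos_aux]
  have hnss : Complex.normSq (Complex.sin w) = Real.sin w.re ^ 2 + Real.sinh w.im ^ 2 := by
    conv_lhs => rw [hrw]
    rw [normSq_sin_aux]
  have hd : Complex.normSq (Complex.cos w) > 0 := by rw [hns]; nlinarith [sq_nonneg (Real.sinh w.im)]
  have habs : ‖Complex.tan w‖ ^ 2
      = Complex.normSq (Complex.sin w) / Complex.normSq (Complex.cos w) := by
    rw [Complex.tan_eq_sin_div_cos, norm_div, div_pow, Complex.sq_norm, Complex.sq_norm]
  have h2 : Real.tan w.re ^ 2 ≤ ‖Complex.tan w‖ ^ 2 := by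
    rw [habs, hns, hnss, Real.tan_eq_sin_div_cos, div_pow]
    rw [div_le_div_iff₀ (pow_pos hc 2) (by nlinarith [sq_nonneg (Real.sinh w.im)] : (0:ℝ) < Real.cos w.re ^ 2 + Real.sinh w.im ^ 2)]
    nlinarith [sq_nonneg (Real.sinh w.im), sq_nonneg (Real.sin w.re)]
  have := norm_nonneg (Complex.tan w)
  nlinarith [abs_nonneg (Real.tan w.re), _root_.sq_abs (Real.tan w.re)]


set_option maxHeartbeats 4000000 in
lemma quad_aux (a r q s x y : ℝ) (ha0 : 0 ≤ a) (ha1 : a < 1) (hr0 : 0 < r) (hr1 : r < 1)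
    (hq0 : 0 ≤ q) (hq2 : q^2 = x^2 + y^2) (hxq : |x| ≤ q) (has : |s| = a)
    (hsq : (x - s)^2 + y^2 ≤ r^2*((1 - s*x)^2 + s^2*y^2)) : q*(1+a*r) ≤ a + r := by
  have hs2 : s^2 = a^2 := by rw [← has, _root_.sq_abs]
  have hsx : s * x ≤ a * q := by
    calc s * x ≤ |s * x| := le_abs_self _
      _ = a * |x| := by rw [abs_mul, has]
      _ ≤ a * q := mul_le_mul_of_nonneg_left hxq ha0
  have e1 : (x - s)^2 + y^2 = q^2 - 2*(s*x) + a^2 := by linear_combination hs2 - hq2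
  have e2 : (1 - s*x)^2 + s^2*y^2 = 1 - 2*(s*x) + a^2*q^2 := by
    linear_combination (x^2 + y^2) * hs2 - a^2 * hq2
  rw [e1, e2] at hsq
  have hfact : (0:ℝ) ≤ (a*q - s*x) * (1 - r^2) := by
    apply mul_nonneg (by linarith) (by nlinarith)
  have hstep : (1 - a^2*r^2)*q^2 - 2*a*(1-r^2)*q + (a^2 - r^2) ≤ 0 := by
    nlinarith [hsq, hfact]
  have hQ : ((1+a*r)*q - (a+r)) * ((1-a*r)*q - (a-r)) ≤ 0 := by nlinarith [hstep]
  have har : a * r < 1 := by nlinarith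
  by_contra hcon
  push_neg at hcon
  have hfac1 : 0 < (1+a*r)*q - (a+r) := by nlinarith
  have hfac2 : (1-a*r)*q - (a-r) ≤ 0 := by
    by_contra hpos
    push_neg at hpos
    nlinarith [mul_pos hfac1 hpos]
  have h1ar : (0:ℝ) < 1 - a*r := by nlinarith
  have har2 : (0:ℝ) < 1 + a*r := by positivity
  have t1 : 0 < (1 - a*r) * ((1+a*r)*q - (a+r)) := mul_pos h1ar hfac1
  have t2 : (1 + a*r) * ((1-a*r)*q - (a-r)) ≤ 0 := by
    simpa using mul_le_mul_of_nonneg_left hfac2 (le_of_lt har2)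
  nlinarith [t1, t2, mul_pos hr0 (show (0:ℝ) < 1 - a^2 by nlinarith)]

set_option maxHeartbeats 1000000 in
theorem boundary_schwarz_real_harmonic
    (u : ℂ → ℝ) (b : ℝ) (hb' : b ∈ Set.Ioo (-1 : ℝ) 1)
    (hharm : ∃ F : ℂ → ℂ, DifferentiableOn ℂ F (Metric.ball 0 1) ∧
      ∀ z ∈ Metric.ball (0 : ℂ) 1, u z = (F z).re)
    (hmaps : ∀ z ∈ Metric.ball (0 : ℂ) 1, u z ∈ Set.Ioo (-1 : ℝ) 1)
    (hb : u 0 = b)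
    (hcont : ContinuousWithinAt u (Metric.closedBall 0 1) 1)
    (hu1 : u 1 = 1)
    (d : ℝ)
    (hd : Filter.Tendsto (fun r : ℝ => (u 1 - u (r : ℂ)) / (1 - r))
      (nhdsWithin 1 (Set.Iio 1)) (nhds d)) :
    |d| ≥ (2 / Real.pi) * (1 - Real.tan (Real.pi * |b| / 4)) /
      (1 + Real.tan (Real.pi * |b| / 4)) := by
  obtain ⟨F, hFdiff, hFre⟩ := hharm
  obtain ⟨hbl, hbr⟩ := hb'
  have hpi : (0:ℝ) < π := Real.pi_pos
  set s : ℝ := Real.tan (π * b / 4) with hs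
  set a : ℝ := Real.tan (π * |b| / 4) with hadef
  have hb1 : |b| < 1 := abs_lt.2 ⟨hbl, hbr⟩
  have habs0 : (0:ℝ) ≤ |b| := abs_nonneg b
  have ha0 : 0 ≤ a :=
    Real.tan_nonneg_of_nonneg_of_le_pi_div_two (by positivity) (by nlinarith)
  have ha1 : a < 1 := by
    have h := Real.tan_lt_tan_of_nonneg_of_lt_pi_div_two (x := π * |b| / 4) (y := π/4)
      (by positivity) (by linarith) (by nlinarith)
    rwa [Real.tan_pi_div_four] at h
  have has : |s| = a := by
    rcases le_or_gt 0 b with hb0 | hb0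
    · rw [_root_.abs_of_nonneg hb0] at hadef
      rw [hadef, hs, _root_.abs_of_nonneg]
      exact Real.tan_nonneg_of_nonneg_of_le_pi_div_two (by positivity) (by nlinarith)
    · rw [_root_.abs_of_neg hb0] at hadef
      have : a = -s := by
        rw [hadef, hs, ← Real.tan_neg]; ring_nf
      rw [this, hs, _root_.abs_of_nonpos]
      have := Real.tan_nonneg_of_nonneg_of_le_pi_div_two
        (x := π * (-b) / 4) (by nlinarith) (by nlinarith)
      rw [show π * (-b)/4 = -(π*b/4) by ring, Real.tan_neg] at this
      linarith
  have hs2 : s^2 = a^2 := by rw [← has, _root_.sq_abs]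
  have hsa : -a ≤ s ∧ s ≤ a := abs_le.1 (le_of_eq has)
  set t : ℝ := (F 0).im with ht
  set h : ℂ → ℂ := fun z => Complex.tan (((π/4 : ℝ) : ℂ) * (F z - (t : ℂ) * Complex.I)) with hh
  have hWre : ∀ z, (((π/4 : ℝ) : ℂ) * (F z - (t : ℂ) * Complex.I)).re = π/4 * (F z).re := by
    intro z; simp [Complex.mul_re]
  have hre_lt : ∀ z ∈ Metric.ball (0:ℂ) 1,
      |(((π/4 : ℝ) : ℂ) * (F z - (t : ℂ) * Complex.I)).re| < π/4 := by
    intro z hz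
    rw [hWre]
    have h1 := hmaps z hz
    rw [hFre z hz] at h1
    have h2 : |(F z).re| < 1 := abs_lt.2 ⟨h1.1, h1.2⟩
    rw [_root_.abs_mul, _root_.abs_of_pos (by positivity : (0:ℝ) < π/4)]
    nlinarith
  have hhdiff : DifferentiableOn ℂ h (Metric.ball 0 1) := by
    intro z hz
    have hcos := cos_ne_zero_aux _ (hre_lt z hz)
    have hinner : DifferentiableWithinAt ℂ
        (fun z => ((π/4 : ℝ) : ℂ) * (F z - (t : ℂ) * Complex.I)) (Metric.ball 0 1) z :=
      ((hFdiff z hz).sub_const _).const_mul _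
    exact (Complex.differentiableAt_tan.2 hcos).comp_differentiableWithinAt z hinner
  have hhlt : ∀ z ∈ Metric.ball (0:ℂ) 1, ‖h z‖ < 1 := by
    intro z hz
    exact abs_tan_lt_one _ (hre_lt z hz)
  have hball0 : (0:ℂ) ∈ Metric.ball (0:ℂ) 1 := Metric.mem_ball_self one_pos
  have hF0 : F 0 - (t:ℂ) * Complex.I = (b : ℂ) := by
    apply Complex.ext
    · simp [← hb, hFre 0 hball0]
    · simp [ht]
  have h0 : h 0 = (s : ℂ) := by
    rw [hh]
    simp only
    rw [hF0, ← Complex.ofReal_mul, ← Complex.ofReal_tan, hs]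
    rw [show π/4*b = π*b/4 by ring]
  set g : ℂ → ℂ := fun z => (h z - (s:ℂ)) / (1 - (s:ℂ) * h z) with hg
  have hden : ∀ z ∈ Metric.ball (0:ℂ) 1, (1 : ℂ) - (s:ℂ) * h z ≠ 0 := by
    intro z hz heq
    have h1 : (s:ℂ) * h z = 1 := by linear_combination -heq
    have h2 := congrArg (‖·‖) h1
    rw [norm_mul, Complex.norm_real, Real.norm_eq_abs, norm_one, has] at h2
    nlinarith [hhlt z hz, norm_nonneg (h z)]
  have hgdiff : DifferentiableOn ℂ g (Metric.ball 0 1) := by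
    intro z hz
    exact ((hhdiff z hz).sub_const _).div
      ((differentiableWithinAt_const _).sub ((hhdiff z hz).const_mul _)) (hden z hz)
  have hgmaps : Set.MapsTo g (Metric.ball (0:ℂ) 1) (Metric.ball (0:ℂ) 1) := by
    intro z hz
    rw [Metric.mem_ball, dist_zero_right, hg]
    simp only
    rw [norm_div]
    rw [div_lt_one (by
      have := hden z hz
      exact (norm_pos_iff.2 this))]
    set x := (h z).re
    set y := (h z).im
    have hns1 : Complex.normSq (h z - (s:ℂ)) = (x - s)^2 + y^2 := by
      rw [Complex.normSq_apply]; simp [x, y]; ring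
    have hns2 : Complex.normSq (1 - (s:ℂ) * h z) = (1 - s*x)^2 + s^2*y^2 := by
      rw [Complex.normSq_apply]; simp [x, y, Complex.mul_re, Complex.mul_im]; ring
    have hxy : x^2 + y^2 < 1 := by
      have := hhlt z hz
      have h3 : Complex.normSq (h z) < 1 := by
        rw [← Complex.sq_norm]; nlinarith [norm_nonneg (h z)]
      rw [Complex.normSq_apply] at h3; nlinarith
    have hs1 : s^2 < 1 := by nlinarith
    have hlt : Complex.normSq (h z - (s:ℂ)) < Complex.normSq (1 - (s:ℂ) * h z) := by
      rw [hns1, hns2]; nlinarith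
    rw [Complex.norm_def, Complex.norm_def]
    exact Real.sqrt_lt_sqrt (Complex.normSq_nonneg _) hlt
  have hg0 : g 0 = 0 := by
    rw [hg]; simp only [h0, sub_self, zero_div]
  clear_value s a t h g
  -- key pointwise bound
  have key : ∀ r : ℝ, 0 < r → r < 1 → u (r:ℂ) ≤ 4/π * Real.arctan ((a+r)/(1+a*r)) := by
    intro r hr0 hr1
    have hrball : ((r:ℝ):ℂ) ∈ Metric.ball (0:ℂ) 1 := by
      rw [Metric.mem_ball, dist_zero_right, Complex.norm_real, Real.norm_eq_abs,
        _root_.abs_of_pos hr0]; exact hr1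
    have hschwarz : ‖g (r:ℂ)‖ ≤ ‖((r:ℝ):ℂ)‖ :=
      Complex.norm_le_norm_of_mapsTo_ball hgdiff (hgmaps.mono_right Metric.ball_subset_closedBall) hg0
        (by rw [Complex.norm_real, Real.norm_eq_abs, _root_.abs_of_pos hr0]; exact hr1)
    rw [Complex.norm_real, Real.norm_eq_abs, _root_.abs_of_pos hr0] at hschwarz
    have hdenpos : 0 < ‖1 - (s:ℂ) * h (r:ℂ)‖ :=
      (norm_pos_iff.2 (hden _ hrball))
    have hnum : ‖h (r:ℂ) - (s:ℂ)‖ ≤ r * ‖1 - (s:ℂ) * h (r:ℂ)‖ := by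
      have := hschwarz
      rw [hg] at this
      simp only at this
      rw [norm_div, div_le_iff₀ hdenpos] at this
      linarith
    set x := (h (r:ℂ)).re with hxdef
    set y := (h (r:ℂ)).im with hydef
    set q := ‖h (r:ℂ)‖ with hq
    have hq0 : 0 ≤ q := norm_nonneg _
    have hq1 : q < 1 := hhlt _ hrball
    have hq2 : q^2 = x^2 + y^2 := by
      rw [hq, Complex.sq_norm, Complex.normSq_apply, hxdef, hydef]; ring
    have hxq : |x| ≤ q := Complex.abs_re_le_norm _
    have hsq : Complex.normSq (h (r:ℂ) - (s:ℂ)) ≤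
        r^2 * Complex.normSq (1 - (s:ℂ) * h (r:ℂ)) := by
      have h1 : ‖h (r:ℂ) - (s:ℂ)‖^2 ≤
          (r * ‖1 - (s:ℂ) * h (r:ℂ)‖)^2 :=
        pow_le_pow_left₀ (norm_nonneg _) hnum 2
      rw [mul_pow, Complex.sq_norm, Complex.sq_norm] at h1
      exact h1
    have hns1 : Complex.normSq (h (r:ℂ) - (s:ℂ)) = (x - s)^2 + y^2 := by
      rw [Complex.normSq_apply]
      simp only [Complex.sub_re, Complex.sub_im, Complex.ofReal_re, Complex.ofReal_im,
        ← hxdef, ← hydef]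
      ring
    have hns2 : Complex.normSq (1 - (s:ℂ) * h (r:ℂ)) = (1 - s*x)^2 + s^2*y^2 := by
      rw [Complex.normSq_apply]
      simp only [Complex.sub_re, Complex.sub_im, Complex.one_re, Complex.one_im,
        Complex.mul_re, Complex.mul_im, Complex.ofReal_re, Complex.ofReal_im,
        ← hxdef, ← hydef]
      ring
    rw [hns1, hns2] at hsq
    clear_value x y q
    have hkey : q * (1+a*r) ≤ a + r := quad_aux a r q s x y ha0 ha1 hr0 hr1 hq0 hq2 hxq has hsq
    -- translate to bound on u r
    have hW := hre_lt (r:ℂ) hrball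
    have htan := tan_abs_le_abs_tan _ hW
    have hh' : h (r:ℂ) = Complex.tan (((π/4 : ℝ) : ℂ) * (F (r:ℂ) - (t:ℂ) * Complex.I)) := by
      rw [hh]
    rw [hWre, ← hh', ← hq] at htan
    rw [hWre] at hW
    rw [← hFre _ hrball] at htan hW
    have harpos : (0:ℝ) < 1 + a*r := by nlinarith
    have hqbound : q ≤ (a+r)/(1+a*r) := by
      rw [le_div_iff₀ harpos]; linarith
    have htan2 : Real.tan (π/4 * u (r:ℂ)) ≤ (a+r)/(1+a*r) := by
      calc Real.tan (π/4 * u (r:ℂ)) ≤ |Real.tan (π/4 * u (r:ℂ))| := le_abs_self _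
        _ ≤ q := htan
        _ ≤ _ := hqbound
    have hu2 : |π/4 * u (r:ℂ)| < π/4 := hW
    have harc : π/4 * u (r:ℂ) ≤ Real.arctan ((a+r)/(1+a*r)) := by
      have h5 : Real.arctan (Real.tan (π/4 * u (r:ℂ))) = π/4 * u (r:ℂ) :=
        Real.arctan_tan (by nlinarith [abs_lt.1 hu2]) (by nlinarith [abs_lt.1 hu2])
      rw [← h5]
      exact Real.arctan_strictMono.monotone htan2
    calc u (r:ℂ) = 4/π * (π/4 * u (r:ℂ)) := by field_simp
      _ ≤ 4/π * Real.arctan ((a+r)/(1+a*r)) :=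
        mul_le_mul_of_nonneg_left harc (by positivity)
  -- the limit of the comparison function
  have hone : (1:ℝ) + a ≠ 0 := by positivity
  have hfa : HasDerivAt (fun r : ℝ => (a + r)/(1 + a*r)) ((1-a)/(1+a)) 1 := by
    have h1 : HasDerivAt (fun r : ℝ => a + r) 1 1 := (hasDerivAt_id 1).const_add a
    have h2 : HasDerivAt (fun r : ℝ => 1 + a*r) a 1 := by
      simpa using ((hasDerivAt_id 1).const_mul a).const_add 1
    have h3 := h1.div h2 (by simpa using (by positivity : (0:ℝ) < 1 + a).ne')
    refine h3.congr_deriv ?_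
    field_simp
    ring
  have hN : HasDerivAt (fun r : ℝ => 1 - (4/π) * Real.arctan ((a+r)/(1+a*r)))
      (-((2/π)*(1-a)/(1+a))) 1 := by
    have h4 := hfa.arctan
    have h5 := (h4.const_mul (4/π)).const_sub 1
    refine h5.congr_deriv ?_
    have he : (a+(1:ℝ))/(1+a*1) = 1 := by rw [mul_one]; rw [div_eq_one_iff_eq (by linarith)]; ring
    rw [he]
    norm_num
    field_simp
    ring
  have hN1 : (fun r : ℝ => 1 - (4/π) * Real.arctan ((a+r)/(1+a*r))) 1 = 0 := by
    simp only
    rw [show (a+(1:ℝ))/(1+a*1) = 1 by rw [mul_one]; rw [div_eq_one_iff_eq (by linarith)]; ring]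
    rw [Real.arctan_one]
    field_simp
    ring
  have hslope := hasDerivAt_iff_tendsto_slope.1 hN
  have hmono : nhdsWithin (1:ℝ) (Set.Iio 1) ≤ nhdsWithin (1:ℝ) {(1:ℝ)}ᶜ :=
    nhdsWithin_mono _ (fun x hx => ne_of_lt hx)
  have hgtend : Filter.Tendsto
      (fun r : ℝ => (1 - (4/π)*Real.arctan ((a+r)/(1+a*r)))/(1-r))
      (nhdsWithin (1:ℝ) (Set.Iio 1)) (nhds ((2/π)*(1-a)/(1+a))) := by
    have h7 := (hslope.mono_left hmono).neg
    rw [neg_neg] at h7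
    refine h7.congr (fun r => ?_)
    rw [slope_def_field]
    have hb1' : ((a:ℝ)+1)/(1+a*1) = 1 := by
      rw [mul_one, div_eq_one_iff_eq (by linarith)]; ring
    simp only [hb1', Real.arctan_one]
    rw [show (1:ℝ) - 4/π * (π/4) = 0 by field_simp; ring, sub_zero,
      show (1:ℝ) - r = -(r-1) by ring, div_neg]
  have hev : (fun r : ℝ => (1 - (4/π)*Real.arctan ((a+r)/(1+a*r)))/(1-r)) ≤ᶠ[nhdsWithin (1:ℝ) (Set.Iio 1)]
      (fun r : ℝ => (u 1 - u (r:ℂ)) / (1 - r)) := by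
    filter_upwards [Ioo_mem_nhdsLT_of_mem (⟨zero_lt_one, le_refl 1⟩ : (1:ℝ) ∈ Set.Ioc 0 1)] with r hr
    have hk := key r hr.1 hr.2
    rw [hu1]
    have h8 : (1 - (4/π)*Real.arctan ((a+r)/(1+a*r))) ≤ 1 - u (r:ℂ) := by linarith
    have h9 : (0:ℝ) < 1 - r := by linarith [hr.2]
    gcongr
  have hLd : (2/π)*(1-a)/(1+a) ≤ d := le_of_tendsto_of_tendsto hgtend hd hev
  calc (2/π) * (1-a) / (1+a) ≤ d := hLd
    _ ≤ |d| := le_abs_self d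
end

section
/- Let B_X, B_Y be the open unit balls of complex Banach spaces X and Y, and f : B_X → B_Y a pluriharmonic mapping, differentiable at a boundary point b ∈ ∂B_X with ‖f(b)‖ = 1 (f extending differentiably to b). Then ‖Df(b)b‖ ≥ s⁻(‖f(0)‖), where s⁻(x) = (2/π)·cot(π(1+x)/4). -/
open Complex Metric Set

lemma normSq_sin_eq (x y : ℝ) :
    Complex.normSq (Complex.sin (x + y * Complex.I)) = Real.sin x ^ 2 + Real.sinh y ^ 2 := by
  have h : Complex.sin (x + y * Complex.I)
      = (Real.sin x : ℂ) * (Real.cosh y : ℂ) + (Real.cos x : ℂ) * ((Real.sinh y : ℂ) * Complex.I) := by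
    rw [Complex.sin_add, Complex.cos_mul_I, Complex.sin_mul_I,
      Complex.ofReal_sin, Complex.ofReal_cos, Complex.ofReal_sinh, Complex.ofReal_cosh]
  rw [h]
  simp [Complex.normSq_apply, Complex.sin_ofReal_re, Complex.cos_ofReal_re, Complex.sinh_ofReal_re]
  have h1 := Real.cosh_sq y
  have h2 := Real.sin_sq_add_cos_sq x
  nlinarith [h1, h2]

lemma normSq_cos_eq (x y : ℝ) :
    Complex.normSq (Complex.cos (x + y * Complex.I)) = Real.cos x ^ 2 + Real.sinh y ^ 2 := by
  have h : Complex.cos (x + y * Complex.I)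
      = (Real.cos x : ℂ) * (Real.cosh y : ℂ) - (Real.sin x : ℂ) * ((Real.sinh y : ℂ) * Complex.I) := by
    rw [Complex.cos_add, Complex.cos_mul_I, Complex.sin_mul_I,
      Complex.ofReal_sin, Complex.ofReal_cos, Complex.ofReal_sinh, Complex.ofReal_cosh]
  rw [h]
  simp [Complex.normSq_apply, Complex.sin_ofReal_re, Complex.cos_ofReal_re, Complex.sinh_ofReal_re]
  have h1 := Real.cosh_sq y
  have h2 := Real.sin_sq_add_cos_sq x
  nlinarith [h1, h2]

lemma strip_cos_ne_zero {w : ℂ} (hw : |w.re| < Real.pi / 4) : Complex.cos w ≠ 0 := by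
  intro h
  rcases Complex.cos_eq_zero_iff.mp h with ⟨k, hk⟩
  have hre : w.re = (2 * (k : ℝ) + 1) * Real.pi / 2 := by
    rw [hk]; push_cast; simp
  have hpi := Real.pi_pos
  have h1 : (1 : ℝ) ≤ |2 * (k : ℝ) + 1| := by
    have : (1 : ℤ) ≤ |2 * k + 1| := Int.one_le_abs (by omega)
    calc (1:ℝ) ≤ ((|2*k+1| : ℤ) : ℝ) := by exact_mod_cast this
    _ = |2 * (k:ℝ) + 1| := by push_cast; simp
  rw [hre] at hw
  rw [abs_div, abs_mul] at hw
  have : |Real.pi| = Real.pi := abs_of_pos hpi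
  rw [this] at hw
  have : |(2:ℝ)| = 2 := by norm_num
  rw [this] at hw
  nlinarith

lemma strip_sin_sq_lt_cos_sq {x : ℝ} (hx : |x| < Real.pi / 4) :
    Real.sin x ^ 2 < Real.cos x ^ 2 := by
  have h2 : Real.cos (2 * x) > 0 := by
    apply Real.cos_pos_of_mem_Ioo
    constructor <;> [nlinarith [abs_lt.mp hx]; nlinarith [abs_lt.mp hx]]
  rw [Real.cos_two_mul'] at h2; linarith

lemma strip_abs_tan_lt_one {w : ℂ} (hw : |w.re| < Real.pi / 4) :
    ‖Complex.tan w‖ < 1 := by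
  have hc := strip_cos_ne_zero hw
  have hw' : w = (w.re : ℂ) + (w.im : ℂ) * Complex.I := (Complex.re_add_im w).symm
  have hs : Complex.normSq (Complex.sin w) = Real.sin w.re ^ 2 + Real.sinh w.im ^ 2 := by
    conv_lhs => rw [hw']
    rw [normSq_sin_eq]
  have hcs : Complex.normSq (Complex.cos w) = Real.cos w.re ^ 2 + Real.sinh w.im ^ 2 := by
    conv_lhs => rw [hw']
    rw [normSq_cos_eq]
  have hlt := strip_sin_sq_lt_cos_sq hw
  have hcpos : 0 < Complex.normSq (Complex.cos w) := by
    rw [hcs]; nlinarith [sq_nonneg (Real.sinh w.im), sq_nonneg (Real.cos w.re), sq_nonneg (Real.sin w.re)]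
  have hsq : ‖Complex.tan w‖ ^ 2 < 1 := by
    rw [Complex.tan_eq_sin_div_cos, norm_div, div_pow, Complex.sq_norm, Complex.sq_norm, hs, hcs]
    rw [div_lt_one (by rw [hcs] at hcpos; exact hcpos)]
    nlinarith
  nlinarith [norm_nonneg (Complex.tan w)]

lemma strip_tan_re_le_abs_tan {w : ℂ} (hw : |w.re| < Real.pi / 4) :
    Real.tan w.re ≤ ‖Complex.tan w‖ := by
  have hc := strip_cos_ne_zero hw
  rcases le_or_gt (Real.tan w.re) 0 with h | h
  · exact h.trans (norm_nonneg _)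
  have hw' : w = (w.re : ℂ) + (w.im : ℂ) * Complex.I := (Complex.re_add_im w).symm
  have hs : Complex.normSq (Complex.sin w) = Real.sin w.re ^ 2 + Real.sinh w.im ^ 2 := by
    conv_lhs => rw [hw']
    rw [normSq_sin_eq]
  have hcs : Complex.normSq (Complex.cos w) = Real.cos w.re ^ 2 + Real.sinh w.im ^ 2 := by
    conv_lhs => rw [hw']
    rw [normSq_cos_eq]
  have hcosx : 0 < Real.cos w.re := by
    apply Real.cos_pos_of_mem_Ioo
    have := abs_lt.mp hw
    constructor <;> nlinarith [Real.pi_pos]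
  have hlt := strip_sin_sq_lt_cos_sq hw
  have hsq : Real.tan w.re ^ 2 ≤ ‖Complex.tan w‖ ^ 2 := by
    rw [Complex.tan_eq_sin_div_cos, norm_div, div_pow, Complex.sq_norm, Complex.sq_norm, hs, hcs,
      Real.tan_eq_sin_div_cos, div_pow]
    rw [div_le_div_iff₀ (by positivity) (by nlinarith [sq_nonneg (Real.sinh w.im)])]
    nlinarith [sq_nonneg (Real.sinh w.im), sq_nonneg (Real.sin w.re)]
  nlinarith [norm_nonneg (Complex.tan w)]

lemma mobius_sq_bound (d t R w : ℝ) (hd0 : 0 ≤ d) (hd : d < 1) (ht0 : 0 ≤ t) (ht : t < 1)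
    (hR0 : 0 ≤ R) (hR : R ≤ t ^ 2) (hw : w ≤ d * t) :
    (R + 2 * w + d ^ 2) * (1 + d * t) ^ 2 ≤ (d + t) ^ 2 * (1 + 2 * w + d ^ 2 * R) := by
  have k1 : 0 ≤ (t ^ 2 - R) * ((1 + d * t) ^ 2 - d ^ 2 * (d + t) ^ 2) := by
    apply mul_nonneg (by linarith)
    have : d * (d + t) ≤ 1 + d * t := by nlinarith
    nlinarith [mul_nonneg hd0 (add_nonneg hd0 ht0)]
  have k2 : 0 ≤ 2 * (d * t - w) * ((1 - d ^ 2) * (1 - t ^ 2)) := by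
    apply mul_nonneg (by linarith)
    apply mul_nonneg <;> nlinarith
  nlinarith [k1, k2]

lemma mobius_abs_le (c : ℝ) (ζ : ℂ) (t : ℝ) (hc : |c| < 1) (ht0 : 0 ≤ t) (ht : t < 1)
    (hζ : ‖ζ‖ ≤ t) :
    ‖(ζ + (c : ℂ)) / (1 + (c : ℂ) * ζ)‖ ≤ (|c| + t) / (1 + |c| * t) := by
  set d := |c| with hdd
  have hd0 : 0 ≤ d := abs_nonneg c
  have hdt : 0 < 1 + d * t := by nlinarith
  have hB : 1 - d * t ≤ ‖1 + (c : ℂ) * ζ‖ := by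
    have h1 : ‖(c : ℂ) * ζ‖ ≤ d * t := by
      rw [norm_mul, Complex.norm_real, Real.norm_eq_abs]
      exact mul_le_mul_of_nonneg_left hζ hd0
    calc 1 - d * t ≤ 1 - ‖(c:ℂ)*ζ‖ := by linarith
    _ ≤ ‖1 + (c:ℂ)*ζ‖ := by
        have h3 : (1:ℝ) ≤ ‖1 + (c:ℂ)*ζ‖ + ‖(c:ℂ)*ζ‖ := by
          have := norm_add_le (1 + (c:ℂ)*ζ) (-((c:ℂ)*ζ))
          simpa using this
        linarith
  have hBpos : 0 < ‖1 + (c : ℂ) * ζ‖ := by nlinarith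
  rw [norm_div, div_le_div_iff₀ hBpos hdt]
  have hRle : Complex.normSq ζ ≤ t ^ 2 := by
    rw [← Complex.sq_norm]; nlinarith [norm_nonneg ζ]
  have hw : c * ζ.re ≤ d * t := by
    have h1 : |c * ζ.re| = d * |ζ.re| := by rw [abs_mul]
    have h2 : |ζ.re| ≤ t := by
      have := Complex.abs_re_le_norm ζ; linarith
    calc c * ζ.re ≤ |c * ζ.re| := le_abs_self _
    _ = d * |ζ.re| := h1
    _ ≤ d * t := mul_le_mul_of_nonneg_left h2 hd0
  have key := mobius_sq_bound d t (Complex.normSq ζ) (c * ζ.re) hd0 hc ht0 ht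
    (Complex.normSq_nonneg ζ) hRle hw
  have e1 : Complex.normSq (ζ + (c : ℂ)) = Complex.normSq ζ + 2 * (c * ζ.re) + d ^ 2 := by
    rw [hdd, _root_.sq_abs]; simp [Complex.normSq_apply]; ring
  have e2 : Complex.normSq (1 + (c : ℂ) * ζ) = 1 + 2 * (c * ζ.re) + d ^ 2 * Complex.normSq ζ := by
    rw [hdd, _root_.sq_abs]; simp [Complex.normSq_apply]; ring
  have hsq : (‖ζ + (c:ℂ)‖ * (1 + d * t)) ^ 2 ≤ ((d + t) * ‖1 + (c:ℂ)*ζ‖) ^ 2 := by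
    rw [mul_pow, mul_pow, Complex.sq_norm, Complex.sq_norm, e1, e2]
    nlinarith [key]
  nlinarith [norm_nonneg (ζ + (c:ℂ)), norm_nonneg (1 + (c:ℂ)*ζ),
    mul_nonneg (norm_nonneg (ζ + (c:ℂ))) hdt.le,
    mul_nonneg (add_nonneg hd0 ht0) (norm_nonneg (1 + (c:ℂ)*ζ))]

lemma mobius_mono (d s t : ℝ) (hd0 : 0 ≤ d) (hds : d ≤ s) (hs : s < 1) (ht0 : 0 ≤ t)
    (ht : t ≤ 1) : (d + t) / (1 + d * t) ≤ (s + t) / (1 + s * t) := by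
  rw [div_le_div_iff₀ (by nlinarith) (by nlinarith)]
  nlinarith [mul_nonneg (sub_nonneg.2 hds) (by nlinarith : (0:ℝ) ≤ 1 - t^2)]

lemma V_hasDerivAt (s : ℝ) (hs0 : 0 ≤ s) (hs1 : s < 1) :
    HasDerivAt (fun t : ℝ => (4 / Real.pi) * Real.arctan ((s + t) / (1 + s * t)))
      ((2 / Real.pi) * ((1 - s) / (1 + s))) 1 := by
  have hden : (1 : ℝ) + s * 1 ≠ 0 := by nlinarith
  have hr : HasDerivAt (fun t : ℝ => (s + t) / (1 + s * t)) ((1 - s) / (1 + s)) 1 := by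
    have h1 : HasDerivAt (fun t : ℝ => s + t) 1 1 := by
      simpa using (hasDerivAt_id (1:ℝ)).const_add s
    have h2 : HasDerivAt (fun t : ℝ => 1 + s * t) s 1 := by
      simpa using ((hasDerivAt_id (1:ℝ)).const_mul s).const_add 1
    have := h1.div h2 hden
    refine HasDerivAt.congr_deriv this ?_
    field_simp
    ring
  have hval : (s + 1) / (1 + s * 1) = 1 := by
    rw [mul_one, div_eq_one_iff_eq (by nlinarith)]; ring
  have harctan : HasDerivAt Real.arctan (1/2 : ℝ) ((s + 1) / (1 + s * 1)) := by
    rw [hval]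
    have := Real.hasDerivAt_arctan 1
    norm_num at this
    exact this
  have hcomp := (harctan.comp 1 hr).const_mul (4 / Real.pi)
  refine HasDerivAt.congr_deriv hcomp ?_
  field_simp
  ring

lemma cot_identity (a : ℝ) (ha0 : 0 ≤ a) (ha1 : a < 1) :
    Real.cot (Real.pi * (1 + a) / 4)
      = (1 - Real.tan (Real.pi / 4 * a)) / (1 + Real.tan (Real.pi / 4 * a)) := by
  have hpi := Real.pi_pos
  have hθ0 : 0 ≤ Real.pi / 4 * a := by positivity
  have hθlt : Real.pi / 4 * a < Real.pi / 4 := by nlinarith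
  have hcos : 0 < Real.cos (Real.pi / 4 * a) :=
    Real.cos_pos_of_mem_Ioo ⟨by nlinarith, by nlinarith⟩
  have hsin : 0 ≤ Real.sin (Real.pi / 4 * a) :=
    Real.sin_nonneg_of_nonneg_of_le_pi hθ0 (by nlinarith)
  have hsq2 : 0 < Real.sqrt 2 := by positivity
  have harg : Real.pi * (1 + a) / 4 = Real.pi / 4 + Real.pi / 4 * a := by ring
  rw [harg, Real.cot_eq_cos_div_sin, Real.cos_add, Real.sin_add,
    Real.cos_pi_div_four, Real.sin_pi_div_four, Real.tan_eq_sin_div_cos]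
  set C := Real.cos (Real.pi / 4 * a) with hC
  set S := Real.sin (Real.pi / 4 * a) with hS
  have hCS : 0 < C + S := by nlinarith
  rw [div_eq_div_iff (by nlinarith) (by
    have : 0 < 1 + S / C := by positivity
    linarith)]
  field_simp

set_option maxHeartbeats 1000000 in
theorem boundary_schwarz_pluriharmonic_banach
    {X Y : Type*} [NormedAddCommGroup X] [NormedSpace ℂ X]
    [NormedAddCommGroup Y] [NormedSpace ℂ Y]
    (f : X → Y)
    (hplh : ∀ (l : Y →L[ℂ] ℂ) (φ : ℂ → X),
      DifferentiableOn ℂ φ (Metric.ball 0 1) →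
      (∀ z ∈ Metric.ball (0 : ℂ) 1, φ z ∈ Metric.ball (0 : X) 1) →
      ∃ F G : ℂ → ℂ, DifferentiableOn ℂ F (Metric.ball 0 1) ∧
        DifferentiableOn ℂ G (Metric.ball 0 1) ∧
        ∀ z ∈ Metric.ball (0 : ℂ) 1, l (f (φ z)) = F z + starRingEnd ℂ (G z))
    (hmaps : ∀ x ∈ Metric.ball (0 : X) 1, f x ∈ Metric.ball (0 : Y) 1)
    (b : X) (hb : ‖b‖ = 1) (hfb : ‖f b‖ = 1)
    (D : X →L[ℝ] Y) (hD : HasFDerivWithinAt f D (Metric.closedBall 0 1) b) :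
    ‖D b‖ ≥ (2 / Real.pi) * Real.cot (Real.pi * (1 + ‖f 0‖) / 4) := by
  have hpi := Real.pi_pos
  have hf0mem : f 0 ∈ Metric.ball (0:Y) 1 := hmaps 0 (by simp)
  have hf0 : ‖f 0‖ < 1 := by simpa [Metric.mem_ball, dist_zero_right] using hf0mem
  set a : ℝ := ‖f 0‖ with ha
  have ha0 : 0 ≤ a := norm_nonneg _
  set s : ℝ := Real.tan (Real.pi / 4 * a) with hsdef
  have hθa0 : 0 ≤ Real.pi / 4 * a := by positivity
  have hθa : Real.pi / 4 * a < Real.pi / 4 := by nlinarith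
  have hs0 : 0 ≤ s := Real.tan_nonneg_of_nonneg_of_le_pi_div_two hθa0 (by nlinarith)
  have hs1 : s < 1 := by
    rw [hsdef, ← Real.tan_pi_div_four]
    exact Real.tan_lt_tan_of_nonneg_of_lt_pi_div_two hθa0 (by nlinarith) hθa
  -- dual functional
  have hfbne : f b ≠ 0 := by intro h0; rw [h0] at hfb; simp at hfb
  obtain ⟨l, hl1, hlfb⟩ := exists_dual_vector ℂ (f b) (norm_ne_zero_iff.mpr hfbne)
  -- the holomorphic curve z ↦ z • b
  have hφd : DifferentiableOn ℂ (fun z : ℂ => z • b) (Metric.ball 0 1) :=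
    (differentiable_id.smul_const b).differentiableOn
  have hφm : ∀ z ∈ Metric.ball (0:ℂ) 1, z • b ∈ Metric.ball (0:X) 1 := by
    intro z hz
    simp only [Metric.mem_ball, dist_zero_right] at hz ⊢
    rw [norm_smul, hb, mul_one]; exact hz
  obtain ⟨F, G, hF, hG, hFG⟩ := hplh l (fun z => z • b) hφd hφm
  set h : ℂ → ℂ := fun z => F z + G z - Complex.I * ((F 0 + G 0).im : ℂ) with hhdef
  have hhd : DifferentiableOn ℂ h (Metric.ball 0 1) :=
    (hF.add hG).sub (differentiableOn_const _)
  have hre : ∀ z ∈ Metric.ball (0:ℂ) 1, (h z).re = (l (f (z • b))).re := by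
    intro z hz
    rw [hFG z hz]
    simp [hhdef]
  have habs : ∀ z ∈ Metric.ball (0:ℂ) 1, |(h z).re| < 1 := by
    intro z hz
    have hfz : ‖f (z • b)‖ < 1 := by
      have := hmaps _ (hφm z hz)
      simpa [Metric.mem_ball, dist_zero_right] using this
    have h1 : ‖l (f (z • b))‖ < 1 := by
      calc ‖l (f (z • b))‖ ≤ ‖l‖ * ‖f (z • b)‖ := l.le_opNorm _
      _ = ‖f (z • b)‖ := by rw [hl1, one_mul]
      _ < 1 := hfz
    rw [hre z hz]
    calc |(l (f (z • b))).re| ≤ ‖l (f (z • b))‖ := Complex.abs_re_le_norm _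
    _ = ‖l (f (z • b))‖ := rfl
    _ < 1 := h1
  -- g = tan (π/4 • h)
  set g : ℂ → ℂ := fun z => Complex.tan (((Real.pi / 4 : ℝ) : ℂ) * h z) with hgdef
  have hargre : ∀ z : ℂ, (((Real.pi / 4 : ℝ) : ℂ) * h z).re = Real.pi / 4 * (h z).re := by
    intro z; simp [Complex.mul_re]
  have hstrip : ∀ z ∈ Metric.ball (0:ℂ) 1,
      |(((Real.pi / 4 : ℝ) : ℂ) * h z).re| < Real.pi / 4 := by
    intro z hz
    rw [hargre, abs_mul, abs_of_pos (by positivity : (0:ℝ) < Real.pi / 4)]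
    have := habs z hz
    nlinarith
  have hgd : DifferentiableOn ℂ g (Metric.ball 0 1) := by
    intro z hz
    exact (Complex.differentiableAt_tan.mpr (strip_cos_ne_zero (hstrip z hz))).comp_differentiableWithinAt z
      ((differentiableWithinAt_const _).mul (hhd z hz))
  have hgabs : ∀ z ∈ Metric.ball (0:ℂ) 1, ‖g z‖ < 1 := fun z hz =>
    strip_abs_tan_lt_one (hstrip z hz)
  -- value at 0
  have h0mem : (0:ℂ) ∈ Metric.ball (0:ℂ) 1 := by simp
  have hh0im : (h 0).im = 0 := by simp [hhdef]
  have hh0eq : h 0 = (((h 0).re : ℝ) : ℂ) := by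
    apply Complex.ext <;> simp [hh0im]
  set c : ℝ := Real.tan (Real.pi / 4 * (h 0).re) with hcdef
  have hg0 : g 0 = (c : ℂ) := by
    rw [hgdef]
    simp only
    conv_lhs => rw [hh0eq]
    rw [← Complex.ofReal_mul, ← Complex.ofReal_tan]
  have hu0 : |(h 0).re| ≤ a := by
    rw [hre 0 h0mem]
    have : (0:ℂ) • b = 0 := zero_smul _ _
    rw [this]
    calc |(l (f 0)).re| ≤ ‖l (f 0)‖ := Complex.abs_re_le_norm _
    _ = ‖l (f 0)‖ := rfl
    _ ≤ ‖l‖ * ‖f 0‖ := l.le_opNorm _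
    _ = a := by rw [hl1, one_mul]
  have hcles : |c| ≤ s := by
    have hmono := Real.strictMonoOn_tan.monotoneOn
    have hmem1 : Real.pi / 4 * (h 0).re ∈ Ioo (-(Real.pi/2)) (Real.pi/2) := by
      have := abs_le.mp hu0
      constructor <;> nlinarith
    have hmem2 : Real.pi / 4 * a ∈ Ioo (-(Real.pi/2)) (Real.pi/2) := by
      constructor <;> nlinarith
    have hmem3 : -(Real.pi / 4 * a) ∈ Ioo (-(Real.pi/2)) (Real.pi/2) := by
      constructor <;> nlinarith
    rw [abs_le]
    constructor
    · rw [hsdef, ← Real.tan_neg]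
      apply hmono hmem3 hmem1
      have := abs_le.mp hu0
      nlinarith
    · rw [hsdef, hcdef]
      apply hmono hmem1 hmem2
      have := abs_le.mp hu0
      nlinarith
  have hclt1 : |c| < 1 := lt_of_le_of_lt hcles hs1
  -- the Möbius-composed map k and the Schwarz lemma
  have hden : ∀ z ∈ Metric.ball (0:ℂ) 1, (1 - (c:ℂ) * g z) ≠ 0 := by
    intro z hz h0
    have h1 : ‖(c:ℂ) * g z‖ < 1 := by
      rw [norm_mul, Complex.norm_real, Real.norm_eq_abs]
      nlinarith [hgabs z hz, abs_nonneg c, norm_nonneg (g z)]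
    have h2 : (c:ℂ) * g z = 1 := by linear_combination -h0
    rw [h2] at h1; simp at h1
  set k : ℂ → ℂ := fun z => (g z - (c:ℂ)) / (1 - (c:ℂ) * g z) with hkdef
  have hkd : DifferentiableOn ℂ k (Metric.ball 0 1) :=
    (hgd.sub (differentiableOn_const _)).div
      ((differentiableOn_const _).sub ((differentiableOn_const _).mul hgd)) hden
  have hkmaps : Set.MapsTo k (Metric.ball 0 1) (Metric.ball 0 1) := by
    intro z hz
    rw [Metric.mem_ball, dist_zero_right, hkdef]
    simp only
    rw [norm_div, div_lt_one (norm_pos_iff.mpr (hden z hz))]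
    have hid : Complex.normSq (1 - (c:ℂ) * g z) - Complex.normSq (g z - (c:ℂ))
        = (1 - c^2) * (1 - Complex.normSq (g z)) := by
      simp [Complex.normSq_apply]; ring
    have hg1 : Complex.normSq (g z) < 1 := by
      rw [← Complex.sq_norm]; nlinarith [hgabs z hz, norm_nonneg (g z)]
    have hc2 : c^2 < 1 := by nlinarith [abs_nonneg c, _root_.sq_abs c]
    have hpos : Complex.normSq (g z - (c:ℂ)) < Complex.normSq (1 - (c:ℂ) * g z) := by
      have hmul := mul_pos (by linarith : (0:ℝ) < 1 - c^2)
        (by linarith : (0:ℝ) < 1 - Complex.normSq (g z))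
      linarith
    have hsqlt : ‖g z - (c:ℂ)‖ ^ 2 < ‖1 - (c:ℂ) * g z‖ ^ 2 := by
      rw [Complex.sq_norm, Complex.sq_norm]; exact hpos
    exact lt_of_pow_lt_pow_left₀ 2 (norm_nonneg _) hsqlt
  have hk0 : k 0 = 0 := by
    rw [hkdef]; simp only [hg0]; simp
  have hSch : ∀ z : ℂ, ‖z‖ < 1 → ‖k z‖ ≤ ‖z‖ := fun z hz =>
    Complex.norm_le_norm_of_mapsTo_ball_self hkd (hkmaps.mono_right ball_subset_closedBall) hk0 hz
  -- the pointwise upper bound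
  have hkey : ∀ t : ℝ, 0 ≤ t → t < 1 →
      (l (f (t • b))).re ≤ (4 / Real.pi) * Real.arctan ((s + t) / (1 + s * t)) := by
    intro t ht0 ht1
    have htabs : ‖(t:ℂ)‖ < 1 := by
      rw [Complex.norm_real, Real.norm_eq_abs, _root_.abs_of_nonneg ht0]; exact ht1
    have htmem : ((t:ℂ)) ∈ Metric.ball (0:ℂ) 1 := by
      rw [Metric.mem_ball, dist_zero_right]; exact htabs
    have hζ : ‖k (t:ℂ)‖ ≤ t := by
      have := hSch (t:ℂ) htabs
      rwa [Complex.norm_real, Real.norm_eq_abs, _root_.abs_of_nonneg ht0] at this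
    have hd2 : (1 + (c:ℂ) * k (t:ℂ)) ≠ 0 := by
      intro h0
      have h1 : ‖(c:ℂ) * k (t:ℂ)‖ < 1 := by
        rw [norm_mul, Complex.norm_real, Real.norm_eq_abs]
        nlinarith [abs_nonneg c, norm_nonneg (k (t:ℂ))]
      have h2 : (c:ℂ) * k (t:ℂ)  = -1 := by linear_combination h0
      rw [h2] at h1; simp at h1
    have hwrec : g (t:ℂ) = (k (t:ℂ) + (c:ℂ)) / (1 + (c:ℂ) * k (t:ℂ)) := by
      have hd1 := hden _ htmem
      rw [eq_div_iff hd2, hkdef]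
      simp only
      have hd1' : 1 - g (t:ℂ) * (c:ℂ) ≠ 0 := by rwa [mul_comm] at hd1
      field_simp
      ring
    have hgt : ‖g (t:ℂ)‖ ≤ (s + t) / (1 + s * t) := by
      rw [hwrec]
      calc ‖((k (t:ℂ)) + (c:ℂ)) / (1 + (c:ℂ) * k (t:ℂ))‖
          ≤ (|c| + t) / (1 + |c| * t) := mobius_abs_le c (k (t:ℂ)) t hclt1 ht0 ht1 hζ
      _ ≤ (s + t) / (1 + s * t) := mobius_mono |c| s t (abs_nonneg c) hcles hs1 ht0 ht1.le
    have hret : (h (t:ℂ)).re = (l (f (t • b))).re := by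
      rw [hre _ htmem, Complex.coe_smul]
    have hx := hstrip _ htmem
    have htan := strip_tan_re_le_abs_tan hx
    rw [hargre] at hx htan
    have harct : Real.pi / 4 * (h (t:ℂ)).re ≤ Real.arctan ((s + t) / (1 + s * t)) := by
      have hxb := abs_lt.mp hx
      rw [← Real.arctan_tan (x := Real.pi / 4 * (h (t:ℂ)).re) (by nlinarith) (by nlinarith)]
      exact Real.arctan_strictMono.monotone (le_trans htan hgt)
    rw [← hret]
    have h4pi : (0:ℝ) < 4 / Real.pi := by positivity
    calc (h (t:ℂ)).re = (4 / Real.pi) * (Real.pi / 4 * (h (t:ℂ)).re) := by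
          field_simp
    _ ≤ (4 / Real.pi) * Real.arctan ((s + t) / (1 + s * t)) := by
          exact mul_le_mul_of_nonneg_left harct h4pi.le
  -- derivative of p at 1
  set p : ℝ → ℝ := fun t => (l (f (t • b))).re with hpdef
  set L : Y →L[ℝ] ℝ := Complex.reCLM.comp (l.restrictScalars ℝ) with hLdef
  have hc1 : HasDerivWithinAt (fun t : ℝ => t • b) b (Icc (0:ℝ) 1) 1 := by
    have := (hasDerivAt_id (1:ℝ)).smul_const b
    simpa using this.hasDerivWithinAt
  have hmaps2 : Set.MapsTo (fun t : ℝ => t • b) (Icc (0:ℝ) 1) (Metric.closedBall 0 1) := by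
    intro t ht
    rw [Metric.mem_closedBall, dist_zero_right, norm_smul, hb, mul_one]
    rw [Real.norm_eq_abs, abs_le]
    exact ⟨by linarith [ht.1], ht.2⟩
  have hD' : HasFDerivWithinAt f D (Metric.closedBall 0 1) ((fun t : ℝ => t • b) 1) := by
    simpa using hD
  have hcomp1 : HasDerivWithinAt (fun t : ℝ => f (t • b)) (D b) (Icc (0:ℝ) 1) 1 :=
    hD'.comp_hasDerivWithinAt 1 hc1 hmaps2
  have hp' : HasDerivWithinAt p (L (D b)) (Icc (0:ℝ) 1) 1 :=
    L.hasFDerivAt.comp_hasDerivWithinAt 1 hcomp1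
  -- derivative of V at 1
  set V : ℝ → ℝ := fun t => (4 / Real.pi) * Real.arctan ((s + t) / (1 + s * t)) with hVdef
  have hV' : HasDerivWithinAt V ((2 / Real.pi) * ((1 - s) / (1 + s))) (Icc (0:ℝ) 1) 1 :=
    (V_hasDerivAt s hs0 hs1).hasDerivWithinAt
  have hp1 : p 1 = 1 := by
    rw [hpdef]
    simp only [one_smul]
    rw [hlfb, hfb]
    simp
  have hV1 : V 1 = 1 := by
    rw [hVdef]
    simp only
    have : (s + 1) / (1 + s * 1) = 1 := by
      rw [mul_one, div_eq_one_iff_eq (by nlinarith)]; ring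
    rw [this, Real.arctan_one]
    field_simp
  -- slope comparison
  have T1 : Filter.Tendsto (slope p 1) (nhdsWithin 1 ((Icc (0:ℝ) 1) \ {1}))
      (nhds (L (D b))) := hasDerivWithinAt_iff_tendsto_slope.mp hp'
  have T2 : Filter.Tendsto (slope V 1) (nhdsWithin 1 ((Icc (0:ℝ) 1) \ {1}))
      (nhds ((2 / Real.pi) * ((1 - s) / (1 + s)))) := hasDerivWithinAt_iff_tendsto_slope.mp hV'
  have hsub : Ioo (0:ℝ) 1 ⊆ (Icc (0:ℝ) 1) \ {1} := by
    intro x hx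
    exact ⟨⟨hx.1.le, hx.2.le⟩, by simp [ne_of_lt hx.2]⟩
  have T1' := T1.mono_left (nhdsWithin_mono 1 hsub)
  have T2' := T2.mono_left (nhdsWithin_mono 1 hsub)
  haveI : (nhdsWithin (1:ℝ) (Ioo (0:ℝ) 1)).NeBot :=
    right_nhdsWithin_Ioo_neBot (by norm_num)
  have hle : (2 / Real.pi) * ((1 - s) / (1 + s)) ≤ L (D b) := by
    apply le_of_tendsto_of_tendsto T2' T1'
    filter_upwards [self_mem_nhdsWithin] with x hx
    have hx1 : x - 1 < 0 := by linarith [hx.2]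
    have h1x : 0 < 1 - x := by linarith [hx.2]
    have hpk := hkey x hx.1.le hx.2
    rw [slope_def_field, slope_def_field, hp1, hV1]
    have e1 : (V x - 1) / (x - 1) = (1 - V x) / (1 - x) := by
      rw [← neg_div_neg_eq]; ring_nf
    have e2 : (p x - 1) / (x - 1) = (1 - p x) / (1 - x) := by
      rw [← neg_div_neg_eq]; ring_nf
    rw [e1, e2]
    have hpx : p x = (l (f (x • b))).re := rfl
    have hVx : V x = (4 / Real.pi) * Real.arctan ((s + x) / (1 + s * x)) := rfl
    exact (div_le_div_iff_of_pos_right h1x).mpr (by linarith [hpk])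

  -- conclude
  have hm : L (D b) ≤ ‖D b‖ := by
    have h1 : L (D b) = (l (D b)).re := rfl
    rw [h1]
    calc (l (D b)).re ≤ |(l (D b)).re| := le_abs_self _
    _ ≤ ‖l (D b)‖ := Complex.abs_re_le_norm _
    _ = ‖l (D b)‖ := rfl
    _ ≤ ‖l‖ * ‖D b‖ := l.le_opNorm _
    _ = ‖D b‖ := by rw [hl1, one_mul]
  rw [ge_iff_le, cot_identity a ha0 hf0, ← hsdef]
  calc (2 / Real.pi) * ((1 - s) / (1 + s)) ≤ L (D b) := hle
  _ ≤ ‖D b‖ := hm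
end

section
/- Fix n > 2, |x| = r ∈ [0,1), α ∈ (0,π), and define the hyperbolic-harmonic boundary comparison T(r) = 2σ*(n)(1-r)^{n-2}(1+r)^{n-1} ∫_α^π sin^{n-2}t / (1-2r cos t + r²)^{n-1} dt, where σ*(n) = Γ(n/2)/(√π Γ((n-1)/2)). Then lim_{r→1⁻} T(r) = 0. -/
open Real Filter

theorem hyperbolic_harmonic_boundary_derivative_vanishes
    (n : ℕ) (hn : 2 < n) (α : ℝ) (hα : α ∈ Set.Ioo 0 Real.pi)
    (σ : ℝ) (hσ : σ = Real.Gamma ((n : ℝ) / 2) / (Real.sqrt Real.pi * Real.Gamma (((n : ℝ) - 1) / 2))) :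
    Filter.Tendsto
      (fun r : ℝ => 2 * σ * (1 - r) ^ (n - 2) * (1 + r) ^ (n - 1) *
        ∫ t in α..Real.pi, Real.sin t ^ (n - 2) / (1 - 2 * r * Real.cos t + r ^ 2) ^ (n - 1))
      (nhdsWithin 1 (Set.Iio 1)) (nhds 0) := by
  obtain ⟨hα0, hαπ⟩ := hα
  have hsin : 0 < Real.sin α := Real.sin_pos_of_pos_of_lt_pi hα0 hαπ
  set B : ℝ := 1 / (Real.sin α ^ 2) ^ (n - 1) with hB
  have hB0 : 0 < B := by positivity
  set C : ℝ := 2 * |σ| * 2 ^ (n - 1) * (B * (Real.pi - α)) with hC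
  apply squeeze_zero_norm' (a := fun r => C * (1 - r) ^ (n - 2))
  · filter_upwards [Ioo_mem_nhdsLT_of_mem (Set.mem_Ioc.2 ⟨zero_lt_one, le_refl (1:ℝ)⟩)]
      with r hr
    obtain ⟨hr0, hr1⟩ := hr
    have h1r : (0:ℝ) ≤ 1 - r := by linarith
    have h1r' : (0:ℝ) ≤ 1 + r := by linarith
    -- bound the integrand
    have hint : ‖∫ t in α..Real.pi,
        Real.sin t ^ (n - 2) / (1 - 2 * r * Real.cos t + r ^ 2) ^ (n - 1)‖
        ≤ B * |Real.pi - α| := by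
      apply intervalIntegral.norm_integral_le_of_norm_le_const
      intro t ht
      rw [Set.uIoc_of_le hαπ.le] at ht
      obtain ⟨htα, htπ⟩ := ht
      have hcos : Real.cos t ≤ Real.cos α :=
        Real.cos_le_cos_of_nonneg_of_le_pi hα0.le htπ htα.le
      have hden : Real.sin α ^ 2 ≤ 1 - 2 * r * Real.cos t + r ^ 2 := by
        nlinarith [sq_nonneg (r - Real.cos α), Real.sin_sq_add_cos_sq α]
      have hden0 : (0:ℝ) < 1 - 2 * r * Real.cos t + r ^ 2 := by
        nlinarith [sq_nonneg (Real.sin α)]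
      have hdenpow : (Real.sin α ^ 2) ^ (n - 1) ≤ (1 - 2 * r * Real.cos t + r ^ 2) ^ (n - 1) :=
        pow_le_pow_left₀ (by positivity) hden _
      have hnum : |Real.sin t ^ (n - 2)| ≤ 1 := by
        rw [abs_pow]
        exact pow_le_one₀ (abs_nonneg _) (Real.abs_sin_le_one t)
      rw [Real.norm_eq_abs, abs_div, abs_of_pos (by positivity : (0:ℝ) < (1 - 2 * r * Real.cos t + r ^ 2) ^ (n - 1))]
      calc |Real.sin t ^ (n - 2)| / (1 - 2 * r * Real.cos t + r ^ 2) ^ (n - 1)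
          ≤ 1 / (Real.sin α ^ 2) ^ (n - 1) := by
            apply div_le_div₀ zero_le_one hnum (by positivity) hdenpow
        _ = B := hB.symm
    rw [Real.norm_eq_abs]
    have key : |2 * σ * (1 - r) ^ (n - 2) * (1 + r) ^ (n - 1) *
        ∫ t in α..Real.pi, Real.sin t ^ (n - 2) / (1 - 2 * r * Real.cos t + r ^ 2) ^ (n - 1)|
        = 2 * |σ| * (1 - r) ^ (n - 2) * (1 + r) ^ (n - 1) *
          |∫ t in α..Real.pi, Real.sin t ^ (n - 2) / (1 - 2 * r * Real.cos t + r ^ 2) ^ (n - 1)| := by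
      rw [abs_mul, abs_mul, abs_mul, abs_mul]
      rw [abs_of_nonneg (by positivity : (0:ℝ) ≤ (1 - r) ^ (n - 2)),
        abs_of_nonneg (by positivity : (0:ℝ) ≤ (1 + r) ^ (n - 1)),
        abs_two]
    rw [key]
    have hπα : |Real.pi - α| = Real.pi - α := abs_of_nonneg (by linarith)
    rw [Real.norm_eq_abs, hπα] at hint
    calc 2 * |σ| * (1 - r) ^ (n - 2) * (1 + r) ^ (n - 1) *
          |∫ t in α..Real.pi, Real.sin t ^ (n - 2) / (1 - 2 * r * Real.cos t + r ^ 2) ^ (n - 1)|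
        ≤ 2 * |σ| * (1 - r) ^ (n - 2) * 2 ^ (n - 1) * (B * (Real.pi - α)) := by
          gcongr
          · linarith
      _ = C * (1 - r) ^ (n - 2) := by rw [hC]; ring
  · have h1 : Filter.Tendsto (fun r : ℝ => C * (1 - r) ^ (n - 2)) (nhds 1)
        (nhds (C * (1 - 1) ^ (n - 2))) :=
      (continuous_const.mul ((continuous_const.sub continuous_id).pow (n - 2))).tendsto 1
    have hne : n - 2 ≠ 0 := Nat.sub_ne_zero_of_lt hn
    simpa [hne] using h1.mono_left nhdsWithin_le_nhds
end

section
/- Let f : 𝔻 → 𝔻 be harmonic (ℂ-valued), continuous up to the boundary point z₀ ∈ ∂𝔻 with f(z₀) = c ∈ ∂𝔻, f(0) = b, and f differentiable at z₀. Then |∂_r f(z₀)| ≥ (2/π)·(1-a)/(1+a), where a = tan(π|Re(c̄ b)|/4). -/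
set_option maxHeartbeats 1000000

open Complex Metric in
lemma my_mobius (a v : ℂ) :
    normSq (1 - (starRingEnd ℂ a) * v) - normSq (v - a)
      = (1 - normSq a) * (1 - normSq v) := by
  simp only [normSq_apply, Complex.sub_re, Complex.sub_im, Complex.mul_re, Complex.mul_im,
    Complex.one_re, Complex.one_im, Complex.conj_re, Complex.conj_im]
  ring

open Complex Metric in
lemma my_schwarz_pick {g : ℂ → ℂ} (hg : DifferentiableOn ℂ g (ball 0 1))
    (hlt : ∀ w ∈ ball (0:ℂ) 1, ‖g w‖ < 1) {z : ℂ} (hz : z ∈ ball (0:ℂ) 1) :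
    ‖g z - g 0‖ ≤ ‖z‖ * ‖1 - (starRingEnd ℂ (g 0)) * g z‖ := by
  have h0 : (0:ℂ) ∈ ball (0:ℂ) 1 := mem_ball_self one_pos
  have e : ∀ u : ℂ, normSq u = ‖u‖^2 := fun u => by
    rw [Complex.normSq_eq_norm_sq]
  set a := g 0 with ha
  have han : ‖a‖ < 1 := hlt 0 h0
  have key : ∀ w ∈ ball (0:ℂ) 1, ‖g w - a‖ < ‖1 - (starRingEnd ℂ a) * g w‖ := by
    intro w hw
    have h1 : normSq (1 - (starRingEnd ℂ a) * g w) - normSq (g w - a)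
        = (1 - normSq a) * (1 - normSq (g w)) := my_mobius a (g w)
    rw [e, e, e, e] at h1
    have hA : ‖a‖^2 < 1 := by nlinarith [norm_nonneg a]
    have hB : ‖g w‖^2 < 1 := by nlinarith [hlt w hw, norm_nonneg (g w)]
    have h4 : ‖g w - a‖ ^ 2 < ‖1 - (starRingEnd ℂ a) * g w‖ ^ 2 := by nlinarith
    exact lt_of_pow_lt_pow_left₀ 2 (norm_nonneg _) h4
  have hden : ∀ w ∈ ball (0:ℂ) 1, (1 - (starRingEnd ℂ a) * g w) ≠ 0 := by
    intro w hw h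
    have := key w hw
    rw [h, norm_zero] at this
    exact absurd this (not_lt.2 (norm_nonneg _))
  set p : ℂ → ℂ := fun w => (g w - a) / (1 - (starRingEnd ℂ a) * g w) with hp
  have hpd : DifferentiableOn ℂ p (ball 0 1) := by
    apply DifferentiableOn.div
    · exact hg.sub (differentiableOn_const a)
    · exact (differentiableOn_const (1:ℂ)).sub ((differentiableOn_const _).mul hg)
    · exact hden
  have hp0 : p 0 = 0 := by simp [hp, ha]
  have hmaps : Set.MapsTo p (ball 0 1) (ball (p 0) 1) := by
    rw [hp0]
    intro w hw
    rw [mem_ball, dist_zero_right, hp]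
    simp only
    rw [norm_div, div_lt_one (lt_of_le_of_lt (norm_nonneg _) (key w hw))]
    exact key w hw
  have hd := dist_le_div_mul_dist_of_mapsTo_ball hpd (hmaps.mono_right ball_subset_closedBall) hz
  rw [hp0, dist_zero_right, dist_zero_right] at hd
  have hpz : ‖p z‖ ≤ ‖z‖ := by simpa using hd
  have hne := hden z hz
  have heq : ‖p z‖ * ‖1 - (starRingEnd ℂ a) * g z‖ = ‖g z - a‖ := by
    rw [hp]; simp only [norm_div]
    rw [div_mul_cancel₀ _ (norm_ne_zero_iff.mpr hne)]
  rw [← heq]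
  exact mul_le_mul_of_nonneg_right hpz (norm_nonneg _)

open Complex in
lemma my_normSq_sin (z : ℂ) :
    normSq (Complex.sin z) = Real.sin z.re ^ 2 + Real.sinh z.im ^ 2 := by
  have h : Complex.sin z = ↑(Real.sin z.re * Real.cosh z.im) +
      ↑(Real.cos z.re * Real.sinh z.im) * I := by
    rw [Complex.sin_eq]; push_cast; ring
  rw [h, normSq_add_mul_I]
  have h1 := Real.sin_sq_add_cos_sq z.re
  have h2 := Real.cosh_sq z.im
  nlinarith [h1, h2]

open Complex in
lemma my_normSq_cos (z : ℂ) :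
    normSq (Complex.cos z) = Real.cos z.re ^ 2 + Real.sinh z.im ^ 2 := by
  have h : Complex.cos z = ↑(Real.cos z.re * Real.cosh z.im) +
      ↑(-(Real.sin z.re * Real.sinh z.im)) * I := by
    rw [Complex.cos_eq]; push_cast; ring
  rw [h, normSq_add_mul_I]
  have h1 := Real.sin_sq_add_cos_sq z.re
  have h2 := Real.cosh_sq z.im
  nlinarith [h1, h2]

section bound
open Complex Metric Real

lemma my_e1 {S W : ℂ} (hS : Complex.cos S ≠ 0) (hW : Complex.cos W ≠ 0) :
    Complex.sin W / Complex.cos W - Complex.sin S / Complex.cos S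
      = Complex.sin (W - S) / (Complex.cos W * Complex.cos S) := by
  rw [Complex.sin_sub]
  field_simp

lemma my_e2 {S W : ℂ} (hS : Complex.cos S ≠ 0) (hW : Complex.cos W ≠ 0) :
    1 - (starRingEnd ℂ) (Complex.sin S / Complex.cos S) * (Complex.sin W / Complex.cos W)
      = Complex.cos (W + starRingEnd ℂ S) / (Complex.cos W * (starRingEnd ℂ (Complex.cos S))) := by
  have hS' : (starRingEnd ℂ) (Complex.cos S) ≠ 0 := by
    simpa only [ne_eq, map_eq_zero] using hS
  rw [map_div₀, Complex.cos_add, Complex.cos_conj, Complex.sin_conj]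
  field_simp

lemma my_harmonic_bound {f F G : ℂ → ℂ} {c : ℂ} (hc : ‖c‖ = 1)
    (hF : DifferentiableOn ℂ F (ball 0 1)) (hG : DifferentiableOn ℂ G (ball 0 1))
    (hfFG : ∀ z ∈ ball (0:ℂ) 1, f z = F z + starRingEnd ℂ (G z))
    (hmaps : ∀ z ∈ ball (0:ℂ) 1, ‖f z‖ < 1)
    {w : ℂ} (hw : w ∈ ball (0:ℂ) 1) :
    ((starRingEnd ℂ c) * f w).re ≤ (4/π) * Real.arctan
      ((Real.tan (π * |((starRingEnd ℂ c) * f 0).re| / 4) + ‖w‖) /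
       (1 + Real.tan (π * |((starRingEnd ℂ c) * f 0).re| / 4) * ‖w‖)) := by
  have hπ : (0:ℝ) < π := Real.pi_pos
  have h0 : (0:ℂ) ∈ ball (0:ℂ) 1 := mem_ball_self one_pos
  have e : ∀ u : ℂ, normSq u = ‖u‖^2 := fun u => by
    rw [Complex.normSq_eq_norm_sq]
  set u : ℂ → ℝ := fun v => ((starRingEnd ℂ c) * f v).re with hu_def
  set H : ℂ → ℂ := fun v => (starRingEnd ℂ c) * F v + c * G v with hH_def
  have hHre : ∀ v ∈ ball (0:ℂ) 1, (H v).re = u v := by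
    intro v hv
    simp only [hH_def, hu_def, hfFG v hv, Complex.add_re, Complex.mul_re, Complex.conj_re,
      Complex.conj_im, Complex.add_im]
    ring
  have hu : ∀ v ∈ ball (0:ℂ) 1, |u v| < 1 := by
    intro v hv
    calc |u v| ≤ ‖(starRingEnd ℂ c) * f v‖ := Complex.abs_re_le_norm _
      _ = ‖c‖ * ‖f v‖ := by rw [norm_mul, Complex.norm_conj]
      _ < 1 := by
          rw [hc, one_mul]
          exact hmaps v hv
  set K : ℂ → ℂ := fun v => (↑(π/4) : ℂ) * H v with hK_def
  have hKre : ∀ v, (K v).re = (π/4) * (H v).re := by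
    intro v; simp [hK_def, Complex.mul_re]
  have hKx : ∀ v ∈ ball (0:ℂ) 1, |(K v).re| < π/4 := by
    intro v hv
    rw [hKre, abs_mul, abs_of_pos (by positivity), hHre v hv]
    calc π/4 * |u v| < π/4 * 1 := by
          exact mul_lt_mul_of_pos_left (hu v hv) (by positivity)
      _ = π/4 := mul_one _
  have hKx2 : ∀ v ∈ ball (0:ℂ) 1, |(K v).re| < π/2 := by
    intro v hv; exact lt_trans (hKx v hv) (by linarith)
  have hcosRpos : ∀ v ∈ ball (0:ℂ) 1, 0 < Real.cos ((K v).re) := by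
    intro v hv
    apply Real.cos_pos_of_mem_Ioo
    constructor
    · linarith [abs_lt.1 (hKx2 v hv) |>.1]
    · linarith [abs_lt.1 (hKx2 v hv) |>.2]
  have hKdiff : DifferentiableOn ℂ K (ball 0 1) :=
    ((hF.const_mul _).add (hG.const_mul _)).const_mul _
  have hcosne : ∀ v ∈ ball (0:ℂ) 1, Complex.cos (K v) ≠ 0 := by
    intro v hv h
    have h1 : normSq (Complex.cos (K v)) = 0 := by rw [h]; simp
    rw [my_normSq_cos] at h1
    nlinarith [hcosRpos v hv, sq_nonneg (Real.sinh (K v).im)]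
  set g : ℂ → ℂ := fun v => Complex.sin (K v) / Complex.cos (K v) with hg_def
  have hgd : DifferentiableOn ℂ g (ball 0 1) :=
    DifferentiableOn.div (Complex.differentiable_sin.comp_differentiableOn hKdiff)
      (Complex.differentiable_cos.comp_differentiableOn hKdiff) hcosne
  have hsinlt : ∀ v ∈ ball (0:ℂ) 1,
      normSq (Complex.sin (K v)) < normSq (Complex.cos (K v)) := by
    intro v hv
    rw [my_normSq_sin, my_normSq_cos]
    have h2 : Real.cos (2 * (K v).re) > 0 := by
      apply Real.cos_pos_of_mem_Ioo
      constructor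
      · have := abs_lt.1 (hKx v hv) |>.1; linarith
      · have := abs_lt.1 (hKx v hv) |>.2; linarith
    have h3 := Real.cos_two_mul ((K v).re)
    have h4 := Real.sin_sq_add_cos_sq ((K v).re)
    nlinarith
  have hglt : ∀ v ∈ ball (0:ℂ) 1, ‖g v‖ < 1 := by
    intro v hv
    rw [hg_def]
    simp only [norm_div]
    rw [div_lt_one]
    · have := hsinlt v hv
      rw [e, e] at this
      nlinarith [norm_nonneg (Complex.sin (K v)), norm_nonneg (Complex.cos (K v))]
    · rw [norm_pos_iff]; exact hcosne v hv
  have SP := my_schwarz_pick hgd hglt hw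
  set ζ := K 0 with hζ_def
  set ω := K w with hω_def
  have hcζ : Complex.cos ζ ≠ 0 := hcosne 0 h0
  have hcω : Complex.cos ω ≠ 0 := hcosne w hw
  have hcζc : Complex.cos (starRingEnd ℂ ζ) ≠ 0 := by
    rw [Complex.cos_conj]
    simp only [ne_eq, map_eq_zero]
    exact hcζ
  have e1 : g w - g 0 = Complex.sin (ω - ζ) / (Complex.cos ω * Complex.cos ζ) :=
    my_e1 hcζ hcω
  have e2 : 1 - (starRingEnd ℂ (g 0)) * g w
      = Complex.cos (ω + starRingEnd ℂ ζ) / (Complex.cos ω * (starRingEnd ℂ (Complex.cos ζ))) :=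
    my_e2 hcζ hcω
  rw [e1, e2] at SP
  rw [norm_div, norm_div, norm_mul, norm_mul, RCLike.norm_conj, ← mul_div_assoc,
    div_le_div_iff_of_pos_right (mul_pos (norm_pos_iff.mpr hcω) (norm_pos_iff.mpr hcζ))] at SP
  -- SP : ‖sin (ω - ζ)‖ ≤ ‖w‖ * ‖cos (ω + conj ζ)‖
  have SP2 : normSq (Complex.sin (ω - ζ))
      ≤ ‖w‖^2 * normSq (Complex.cos (ω + starRingEnd ℂ ζ)) := by
    rw [e, e]
    nlinarith [SP, norm_nonneg (Complex.sin (ω - ζ)), norm_nonneg w,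
      norm_nonneg (Complex.cos (ω + starRingEnd ℂ ζ)),
      mul_nonneg (norm_nonneg w) (norm_nonneg (Complex.cos (ω + starRingEnd ℂ ζ)))]
  rw [my_normSq_sin, my_normSq_cos] at SP2
  simp only [Complex.sub_re, Complex.sub_im, Complex.add_re, Complex.add_im,
    Complex.conj_re, Complex.conj_im, ← sub_eq_add_neg] at SP2
  set x0 := ζ.re with hx0_def
  set x1 := ω.re with hx1_def
  set r := ‖w‖ with hr_def
  have hr1 : r < 1 := by rw [hr_def, ← dist_zero_right]; exact mem_ball.1 hw
  have hr0 : (0:ℝ) ≤ r := norm_nonneg w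
  have hx0 : |x0| < π/4 := hKx 0 h0
  have hx1 : |x1| < π/4 := hKx w hw
  have hσ : 0 < Real.cos (x1 + x0) := by
    have h1 := abs_lt.1 hx0; have h2 := abs_lt.1 hx1
    exact Real.cos_pos_of_mem_Ioo ⟨by linarith [h1.1, h2.1], by linarith [h1.2, h2.2]⟩
  have hsq : Real.sin (x1 - x0)^2 ≤ (r * Real.cos (x1 + x0))^2 := by
    nlinarith [SP2, sq_nonneg (Real.sinh (ω.im - ζ.im)), hr0, hr1,
      mul_nonneg (by nlinarith : (0:ℝ) ≤ 1 - r^2) (sq_nonneg (Real.sinh (ω.im - ζ.im)))]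
  have habs : Real.sin (x1 - x0) ≤ r * Real.cos (x1 + x0) := by
    have h5 := Real.sqrt_le_sqrt hsq
    rw [Real.sqrt_sq_eq_abs, Real.sqrt_sq (mul_nonneg hr0 hσ.le)] at h5
    linarith [le_abs_self (Real.sin (x1 - x0))]
  rw [Real.sin_sub, Real.cos_add] at habs
  have hc0 : 0 < Real.cos x0 := hcosRpos 0 h0
  have hc1 : 0 < Real.cos x1 := hcosRpos w hw
  set t0 := Real.tan x0 with ht0_def
  set t1 := Real.tan x1 with ht1_def
  have e5 : t1 * (1 + r * t0) * (Real.cos x0 * Real.cos x1)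
      = Real.sin x1 * Real.cos x0 + r * (Real.sin x0 * Real.sin x1) := by
    rw [ht0_def, ht1_def, Real.tan_eq_sin_div_cos, Real.tan_eq_sin_div_cos]
    field_simp
  have e6 : (t0 + r) * (Real.cos x0 * Real.cos x1)
      = Real.sin x0 * Real.cos x1 + r * (Real.cos x0 * Real.cos x1) := by
    rw [ht0_def, Real.tan_eq_sin_div_cos]
    field_simp
  have key : t1 * (1 + r * t0) ≤ t0 + r := by
    rw [← mul_le_mul_iff_of_pos_right (mul_pos hc0 hc1), e5, e6]
    nlinarith [habs]
  -- tan of abs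
  have tan_abs_eq : ∀ x : ℝ, |x| < π/2 → Real.tan |x| = |Real.tan x| := by
    intro x hx
    rcases le_or_gt 0 x with h|h
    · rw [_root_.abs_of_nonneg h, _root_.abs_of_nonneg (Real.tan_nonneg_of_nonneg_of_le_pi_div_two h
        (by rw [_root_.abs_of_nonneg h] at hx; linarith))]
    · rw [_root_.abs_of_neg h, Real.tan_neg, _root_.abs_of_neg (Real.tan_neg_of_neg_of_pi_div_two_lt h
        (by rw [_root_.abs_of_neg h] at hx; linarith))]
  have ht0abs : |t0| = Real.tan |x0| := (tan_abs_eq x0 (by linarith)).symm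
  have ht1abs : |t1| = Real.tan |x1| := (tan_abs_eq x1 (by linarith)).symm
  have htlt1 : ∀ x : ℝ, |x| < π/4 → Real.tan |x| < 1 := by
    intro x hx
    rw [← Real.tan_pi_div_four]
    exact Real.tan_lt_tan_of_nonneg_of_lt_pi_div_two (abs_nonneg x) (by linarith) hx
  have ht0lt : |t0| < 1 := by rw [ht0abs]; exact htlt1 x0 hx0
  have ht1lt : |t1| < 1 := by rw [ht1abs]; exact htlt1 x1 hx1
  have hm0 : (0:ℝ) ≤ |t0| := abs_nonneg t0
  have hden : (0:ℝ) < 1 + |t0| * r := by nlinarith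
  have final : t1 ≤ (|t0| + r) / (1 + |t0| * r) := by
    rw [le_div_iff₀ hden]
    nlinarith [key, le_abs_self t0, neg_abs_le t0, le_abs_self t1, ht1lt,
      mul_nonneg hr0 (sub_nonneg.2 (le_abs_self t0)),
      mul_nonneg (sub_nonneg.2 ht1lt.le) (mul_nonneg hr0 (sub_nonneg.2 (le_abs_self t0))),
      mul_nonneg (sub_nonneg.2 hr1.le) (sub_nonneg.2 (le_abs_self t0))]
  have hx1arc : x1 ≤ Real.arctan ((|t0| + r) / (1 + |t0| * r)) := by
    have h6 : x1 = Real.arctan t1 := by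
      rw [ht1_def, Real.arctan_tan (by linarith [(abs_lt.1 hx1).1]) (by linarith [(abs_lt.1 hx1).2])]
    rw [h6]
    exact Real.arctan_strictMono.monotone final
  -- convert goal
  have hgoalm : Real.tan (π * |((starRingEnd ℂ c) * f 0).re| / 4) = |t0| := by
    have hx0u : x0 = π/4 * ((starRingEnd ℂ c) * f 0).re := by
      rw [hx0_def, hζ_def, hKre, hHre 0 h0]
    rw [ht0abs]
    congr 1
    rw [hx0u, abs_mul, _root_.abs_of_pos (by positivity : (0:ℝ) < π/4)]
    ring
  have huw : ((starRingEnd ℂ c) * f w).re = 4/π * x1 := by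
    have : x1 = π/4 * ((starRingEnd ℂ c) * f w).re := by
      rw [hx1_def, hω_def, hKre, hHre w hw]
    rw [this]
    field_simp
  rw [hgoalm, huw]
  have h7 : (0:ℝ) ≤ 4/π := by positivity
  calc 4/π * x1 ≤ 4/π * Real.arctan ((|t0| + r) / (1 + |t0| * r)) :=
        mul_le_mul_of_nonneg_left hx1arc h7
    _ = 4/π * Real.arctan ((|t0| + r) / (1 + |t0| * r)) := rfl

end bound

section main
open Complex Metric Real Filter

theorem boundary_schwarz_complex_harmonic
    (f : ℂ → ℂ) (z₀ c b : ℂ) (hz₀ : ‖z₀‖ = 1) (hc : ‖c‖ = 1)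
    (hharm : ∃ F G : ℂ → ℂ, DifferentiableOn ℂ F (Metric.ball 0 1) ∧
      DifferentiableOn ℂ G (Metric.ball 0 1) ∧
      ∀ z ∈ Metric.ball (0 : ℂ) 1, f z = F z + starRingEnd ℂ (G z))
    (hmaps : ∀ z ∈ Metric.ball (0 : ℂ) 1, ‖f z‖ < 1)
    (hcont : ContinuousWithinAt f (Metric.closedBall 0 1) z₀)
    (hfz₀ : f z₀ = c) (hf0 : f 0 = b)
    (d : ℂ)
    (hd : Filter.Tendsto (fun r : ℝ => (1 - r)⁻¹ • (f z₀ - f ((r : ℂ) * z₀)))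
      (nhdsWithin 1 (Set.Iio 1)) (nhds d)) :
    ‖d‖ ≥ (2 / Real.pi) *
        (1 - Real.tan (Real.pi * |(starRingEnd ℂ c * b).re| / 4)) /
        (1 + Real.tan (Real.pi * |(starRingEnd ℂ c * b).re| / 4)) := by
  obtain ⟨F, G, hF, hG, hfFG⟩ := hharm
  have hπ : (0:ℝ) < π := Real.pi_pos
  set m := Real.tan (π * |(starRingEnd ℂ c * b).re| / 4) with hm_def
  have hb1 : ‖b‖ < 1 := by rw [← hf0]; exact hmaps 0 (mem_ball_self one_pos)
  have hu0 : |(starRingEnd ℂ c * b).re| < 1 := by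
    calc |(starRingEnd ℂ c * b).re| ≤ ‖starRingEnd ℂ c * b‖ :=
          Complex.abs_re_le_norm _
      _ = ‖c‖ * ‖b‖ := by rw [norm_mul, Complex.norm_conj]
      _ < 1 := by
          rw [hc, one_mul]
          exact hb1
  have hu0' : (0:ℝ) ≤ |(starRingEnd ℂ c * b).re| := abs_nonneg _
  have hm0 : 0 ≤ m := by
    rw [hm_def]
    apply Real.tan_nonneg_of_nonneg_of_le_pi_div_two (by positivity)
    nlinarith
  have hm1 : m < 1 := by
    rw [hm_def, ← Real.tan_pi_div_four]
    apply Real.tan_lt_tan_of_nonneg_of_lt_pi_div_two (by positivity) (by linarith)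
    nlinarith
  have h1m : (0:ℝ) < 1 + m := by linarith
  set ψ : ℝ → ℝ := fun r => 4/π * Real.arctan ((m + r)/(1 + m*r)) with hψ_def
  have hψ1 : ψ 1 = 1 := by
    rw [hψ_def]
    simp only [mul_one]
    rw [show (m + 1)/(1 + m) = 1 by rw [add_comm m 1]; exact div_self h1m.ne']
    rw [Real.arctan_one]
    field_simp
  -- derivative of ψ at 1
  have hq : HasDerivAt (fun r : ℝ => (m + r)/(1 + m*r)) ((1-m)/(1+m)) 1 := by
    have h1 : HasDerivAt (fun r : ℝ => m + r) 1 1 := (hasDerivAt_id 1).const_add m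
    have h2 : HasDerivAt (fun r : ℝ => 1 + m*r) m 1 := by
      simpa using ((hasDerivAt_id 1).const_mul m).const_add 1
    have h3 := h1.div h2 (by nlinarith : (1:ℝ) + m*1 ≠ 0)
    rw [show (1-m)/(1+m) = (1 * (1 + m * 1) - (m + 1) * m) / (1 + m * 1) ^ 2 by
      rw [div_eq_div_iff h1m.ne' (pow_ne_zero 2 (by rw [mul_one]; exact h1m.ne'))]
      ring]
    exact h3
  have hq1 : (m + 1)/(1 + m*1) = 1 := by
    rw [mul_one, add_comm m 1]; exact div_self h1m.ne'
  have harc : HasDerivAt (fun r : ℝ => Real.arctan ((m + r)/(1 + m*r)))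
      (1/(1+(1:ℝ)^2) * ((1-m)/(1+m))) 1 := by
    have := (Real.hasDerivAt_arctan ((m + 1)/(1 + m*1))).comp 1 hq
    rwa [hq1] at this
  have hψd : HasDerivAt ψ (2 / π * (1 - m) / (1 + m)) 1 := by
    have := harc.const_mul (4/π)
    rw [show 2 / π * (1 - m) / (1 + m) = 4/π * (1/(1+(1:ℝ)^2) * ((1-m)/(1+m))) by ring]
    exact this
  have hslope : Tendsto (slope ψ 1) (nhdsWithin 1 (Set.Iio 1))
      (nhds (2 / π * (1 - m) / (1 + m))) := by
    have h4 := hasDerivAt_iff_tendsto_slope.mp hψd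
    exact h4.mono_left (nhdsWithin_mono 1 (fun x hx => ne_of_lt hx))
  -- tendsto of real parts
  have hre : Tendsto (fun r : ℝ => ((starRingEnd ℂ c) *
      ((1 - r)⁻¹ • (f z₀ - f ((r:ℂ) * z₀)))).re) (nhdsWithin 1 (Set.Iio 1))
      (nhds ((starRingEnd ℂ c * d).re)) := by
    have hcont2 : Continuous (fun z : ℂ => ((starRingEnd ℂ c) * z).re) :=
      Complex.continuous_re.comp (continuous_const.mul continuous_id)
    exact (hcont2.tendsto d).comp hd
  -- eventual inequality
  have hev : ∀ᶠ r in nhdsWithin (1:ℝ) (Set.Iio 1), slope ψ 1 r ≤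
      ((starRingEnd ℂ c) * ((1 - r)⁻¹ • (f z₀ - f ((r:ℂ) * z₀)))).re := by
    filter_upwards [Ioo_mem_nhdsLT_of_mem (⟨zero_lt_one, le_refl 1⟩ : (1:ℝ) ∈ Set.Ioc 0 1)]
      with r hr
    have hr0 : (0:ℝ) < r := hr.1
    have hr1 : r < 1 := hr.2
    have hrz : ((r:ℂ) * z₀) ∈ ball (0:ℂ) 1 := by
      rw [mem_ball, dist_zero_right, norm_mul, Complex.norm_real, hz₀, mul_one,
        Real.norm_eq_abs, _root_.abs_of_pos hr0]
      exact hr1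
    have hnorm : ‖(r:ℂ) * z₀‖ = r := by
      rw [norm_mul, Complex.norm_real, hz₀, mul_one, Real.norm_eq_abs, _root_.abs_of_pos hr0]
    have hbound := my_harmonic_bound hc hF hG hfFG hmaps hrz
    rw [hnorm, hf0] at hbound
    -- hbound : (c̄ * f (rz₀)).re ≤ ψ r
    have hre1 : ((starRingEnd ℂ c) * f z₀).re = 1 := by
      rw [hfz₀, mul_comm, Complex.mul_conj]
      simp [Complex.normSq_eq_norm_sq, hc]
    have hsmul : ((starRingEnd ℂ c) * ((1 - r)⁻¹ • (f z₀ - f ((r:ℂ) * z₀)))).re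
        = (1 - r)⁻¹ * (1 - ((starRingEnd ℂ c) * f ((r:ℂ) * z₀)).re) := by
      rw [mul_smul_comm, Complex.smul_re, mul_sub, Complex.sub_re, hre1, smul_eq_mul]
    rw [hsmul]
    rw [slope_def_field, hψ1]
    have h1r : (0:ℝ) < 1 - r := by linarith
    have e7 : (ψ r - 1)/(r - 1) = (1 - ψ r) / (1 - r) := by
      rw [← neg_div_neg_eq, neg_sub, neg_sub]
    rw [e7, div_eq_inv_mul]
    have hinv : (0:ℝ) ≤ (1 - r)⁻¹ := (inv_pos.mpr h1r).le
    refine mul_le_mul_of_nonneg_left ?_ hinv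
    have e8 : ψ r = 4/π * Real.arctan ((m + r)/(1 + m*r)) := rfl
    rw [e8]
    linarith [hbound]
  have hled : 2 / π * (1 - m) / (1 + m) ≤ ((starRingEnd ℂ c) * d).re :=
    le_of_tendsto_of_tendsto hslope hre hev
  have hfin : ((starRingEnd ℂ c) * d).re ≤ ‖d‖ := by
    calc ((starRingEnd ℂ c) * d).re ≤ |((starRingEnd ℂ c) * d).re| := le_abs_self _
      _ ≤ ‖(starRingEnd ℂ c) * d‖ := Complex.abs_re_le_norm _
      _ = ‖c‖ * ‖d‖ := by rw [norm_mul, Complex.norm_conj]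
      _ = ‖d‖ := by rw [hc, one_mul]
  rw [ge_iff_le]
  linarith


end main
end
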